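/- Let Φ ∈ ℝ^{m×n}, let T ⊆ {1,…,n} with #T = s, and let k ≥ 1. Assume Φ satisfies the RIP of order s+2k with radius δ ∈ (0, √2 − 1). Let x ∈ ℝⁿ, ε ≥ 0, y = Φx + n with ‖n‖₂ ≤ ε, and let x* solve iBPDN. Set r = x − x_T and let T₀ be a set of k largest-magnitude entries of r. Then ‖x − x*‖₂ ≤ C·ε + D·k^{−1/2}‖r − r_{T₀}‖₁, where C = 4√(1+δ)/(1 − δ − √2·δ) and D = 2(1 + √2·δ − δ)/(1 − δ − √2·δ). (In particular, Φ also satisfies the RIP of order 2k with radius δ, and δ² + 2δ < 1, so the stability condition δ_{2k}² + 2δ_{s+2k} < 1 holds with δ_{2k} = δ_{s+2k} = δ.) -/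

import Mathlib

open scoped BigOperators

/-- The Euclidean (ℓ₂) norm of a vector. -/
noncomputable def l2 {d : ℕ} (u : Fin d → ℝ) : ℝ := Real.sqrt (∑ i, (u i) ^ 2)

/-- The ℓ₁ norm of a vector. -/
noncomputable def l1 {d : ℕ} (u : Fin d → ℝ) : ℝ := ∑ i, |u i|

/-- `restr S u` equals `u` on `S` and `0` outside `S`. -/
def restr {n : ℕ} (S : Finset (Fin n)) (u : Fin n → ℝ) : Fin n → ℝ :=
  fun i => if i ∈ S then u i else 0

/-- Restricted Isometry Property of order `q` with radius `δ`. -/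
def RIP {m n : ℕ} (Φ : Matrix (Fin m) (Fin n) ℝ) (q : ℕ) (δ : ℝ) : Prop :=
  ∀ u : Fin n → ℝ, (Function.support u).ncard ≤ q →
    (1 - δ) * (l2 u) ^ 2 ≤ (l2 (Φ.mulVec u)) ^ 2 ∧
    (l2 (Φ.mulVec u)) ^ 2 ≤ (1 + δ) * (l2 u) ^ 2

/-- `xs` solves the innovative Basis Pursuit DeNoise program. -/
def solvesIBPDN {m n : ℕ} (Φ : Matrix (Fin m) (Fin n) ℝ) (y : Fin m → ℝ) (ε : ℝ)
    (T : Finset (Fin n)) (xs : Fin n → ℝ) : Prop :=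
  l2 (y - Φ.mulVec xs) ≤ ε ∧
  ∀ u : Fin n → ℝ, l2 (y - Φ.mulVec u) ≤ ε → l1 (restr Tᶜ xs) ≤ l1 (restr Tᶜ u)

/-- `S` is a set of largest-magnitude entries of `r`. -/
def isLargest {n : ℕ} (r : Fin n → ℝ) (S : Finset (Fin n)) : Prop :=
  ∀ i ∈ S, ∀ j ∉ S, |r j| ≤ |r i|

/-! With `h = x - x*`, feasibility of both `x` and `x*` gives the tube bound `‖Φ h‖₂ ≤ 2ε`, and
ℓ₁-minimality of `x*` off `T` gives the cone bound
`‖h_{(T ∪ T₀)ᶜ}‖₁ ≤ ‖h_{T₀}‖₁ + 2 ‖r - r_{T₀}‖₁`. Sorting the entries of `h` outside `T ∪ T₀` by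
magnitude into blocks `B₀, B₁, …` of size `k`, each block is dominated entrywise by the previous
one, so `∑_{j ≥ 1} ‖h_{B_j}‖₂ ≤ k^{-1/2} ‖h_{(T ∪ T₀)ᶜ}‖₁`. The RIP lower bound on the head
`h_{T ∪ T₀ ∪ B₀}` (support size `≤ s + 2k`), combined with restricted orthogonality between the
head and each tail block, gives `(1 - δ) ‖h_head‖₂ ≤ 2 √(1 + δ) ε + √2 δ ∑_{j ≥ 1} ‖h_{B_j}‖₂`,
while the cone bound makes that tail sum at most `‖h_head‖₂ + 2 k^{-1/2} ‖r - r_{T₀}‖₁`. -/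

open Finset Matrix Function

section Norms

variable {d : ℕ}

lemma l2_eq_norm (u : Fin d → ℝ) : l2 u = ‖WithLp.toLp 2 u‖ := by
  simp [l2, EuclideanSpace.norm_eq]

lemma dotProduct_eq_inner (u v : Fin d → ℝ) :
    u ⬝ᵥ v = inner ℝ (WithLp.toLp 2 u) (WithLp.toLp 2 v) := by
  simp [EuclideanSpace.inner_eq_star_dotProduct, dotProduct_comm]

lemma l2_nonneg (u : Fin d → ℝ) : 0 ≤ l2 u := Real.sqrt_nonneg _

lemma sq_l2 (u : Fin d → ℝ) : l2 u ^ 2 = ∑ i, u i ^ 2 := Real.sq_sqrt (by positivity)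

lemma sq_l2_eq_dotProduct_self (u : Fin d → ℝ) : l2 u ^ 2 = u ⬝ᵥ u := by
  rw [sq_l2]; simp [dotProduct, sq]

lemma l2_eq_zero {u : Fin d → ℝ} : l2 u = 0 ↔ u = 0 := by
  simp [l2_eq_norm]

lemma l2_add_le (u v : Fin d → ℝ) : l2 (u + v) ≤ l2 u + l2 v := by
  simpa [l2_eq_norm] using norm_add_le (WithLp.toLp 2 u) (WithLp.toLp 2 v)

lemma l2_sub_le (u v : Fin d → ℝ) : l2 (u - v) ≤ l2 u + l2 v := by
  simpa [l2_eq_norm] using norm_sub_le (WithLp.toLp 2 u) (WithLp.toLp 2 v)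

lemma l2_sum_le {ι : Type*} (s : Finset ι) (u : ι → Fin d → ℝ) :
    l2 (∑ j ∈ s, u j) ≤ ∑ j ∈ s, l2 (u j) := by
  simpa [l2_eq_norm, WithLp.toLp_sum] using norm_sum_le s fun j => WithLp.toLp 2 (u j)

lemma abs_dotProduct_le (u v : Fin d → ℝ) : |u ⬝ᵥ v| ≤ l2 u * l2 v := by
  simpa [dotProduct_eq_inner, l2_eq_norm] using
    abs_real_inner_le_norm (WithLp.toLp 2 u) (WithLp.toLp 2 v)

lemma sq_l2_smul_add_smul (a b : ℝ) (u v : Fin d → ℝ) :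
    l2 (a • u + b • v) ^ 2 = a ^ 2 * l2 u ^ 2 + 2 * a * b * (u ⬝ᵥ v) + b ^ 2 * l2 v ^ 2 := by
  simp only [sq_l2, dotProduct, Pi.add_apply, Pi.smul_apply, smul_eq_mul, mul_sum,
    ← sum_add_distrib]
  exact sum_congr rfl fun i _ => by ring

end Norms

section Restriction

variable {n : ℕ}

lemma restr_add_restr_compl (S : Finset (Fin n)) (u : Fin n → ℝ) :
    restr S u + restr Sᶜ u = u := by
  ext i; by_cases hi : i ∈ S <;> simp [restr, hi]

lemma sub_restr (S : Finset (Fin n)) (u : Fin n → ℝ) : u - restr S u = restr Sᶜ u := by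
  ext i; by_cases hi : i ∈ S <;> simp [restr, hi]

lemma restr_restr (S S' : Finset (Fin n)) (u : Fin n → ℝ) :
    restr S (restr S' u) = restr (S ∩ S') u := by
  ext i; by_cases hi : i ∈ S <;> simp [restr, hi]

lemma restr_union {S S' : Finset (Fin n)} (h : Disjoint S S') (u : Fin n → ℝ) :
    restr (S ∪ S') u = restr S u + restr S' u := by
  ext i
  by_cases hi : i ∈ S
  · simp [restr, hi, disjoint_left.1 h hi]
  · simp [restr, hi]

lemma dotProduct_restr_restr {S S' : Finset (Fin n)} (h : Disjoint S S') (u v : Fin n → ℝ) :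
    restr S u ⬝ᵥ restr S' v = 0 := by
  refine sum_eq_zero fun i _ => ?_
  by_cases hi : i ∈ S
  · simp [restr, disjoint_left.1 h hi]
  · simp [restr, hi]

lemma ncard_support_le_card {u : Fin n → ℝ} {S : Finset (Fin n)} (hu : ∀ i ∉ S, u i = 0) :
    (Function.support u).ncard ≤ #S := by
  rw [← Set.ncard_coe_finset]
  exact Set.ncard_le_ncard (fun i hi => by_contra fun h => hi (hu i h))

lemma ncard_support_restr_le (S : Finset (Fin n)) (u : Fin n → ℝ) :
    (Function.support (restr S u)).ncard ≤ #S :=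
  ncard_support_le_card fun i hi => by simp [restr, hi]

lemma l2_restr (S : Finset (Fin n)) (u : Fin n → ℝ) : l2 (restr S u) = √(∑ i ∈ S, u i ^ 2) := by
  simp [l2, restr, ite_pow, sum_ite_mem]

lemma sq_l2_restr (S : Finset (Fin n)) (u : Fin n → ℝ) :
    l2 (restr S u) ^ 2 = ∑ i ∈ S, u i ^ 2 := by
  rw [l2_restr, Real.sq_sqrt (by positivity)]

lemma l1_restr (S : Finset (Fin n)) (u : Fin n → ℝ) : l1 (restr S u) = ∑ i ∈ S, |u i| := by
  simp [l1, restr, apply_ite, sum_ite_mem]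

lemma l2_restr_mono {S S' : Finset (Fin n)} (h : S ⊆ S') (u : Fin n → ℝ) :
    l2 (restr S u) ≤ l2 (restr S' u) := by
  rw [l2_restr, l2_restr]
  exact Real.sqrt_le_sqrt <| sum_le_sum_of_subset_of_nonneg h fun i _ _ => sq_nonneg _

lemma l1_restr_le_sqrt_card_mul_l2 (S : Finset (Fin n)) (u : Fin n → ℝ) :
    l1 (restr S u) ≤ √(#S) * l2 (restr S u) := by
  simpa [l1_restr, l2_restr] using Real.sum_mul_le_sqrt_mul_sqrt S (fun _ => 1) fun i => |u i|

lemma l2_restr_add_l2_restr_le {S S' : Finset (Fin n)} (h : Disjoint S S') (u : Fin n → ℝ) :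
    l2 (restr S u) + l2 (restr S' u) ≤ √2 * l2 (restr (S ∪ S') u) := by
  have hpyth : l2 (restr (S ∪ S') u) ^ 2 = l2 (restr S u) ^ 2 + l2 (restr S' u) ^ 2 := by
    simp only [sq_l2_restr, sum_union h]
  calc l2 (restr S u) + l2 (restr S' u)
      ≤ √(2 * (l2 (restr S u) ^ 2 + l2 (restr S' u) ^ 2)) :=
        Real.le_sqrt_of_sq_le (by nlinarith [sq_nonneg (l2 (restr S u) - l2 (restr S' u))])
    _ = √2 * l2 (restr (S ∪ S') u) := by
        rw [← hpyth, Real.sqrt_mul zero_le_two, Real.sqrt_sq (l2_nonneg _)]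

end Restriction

section RIP

variable {m n : ℕ} {Φ : Matrix (Fin m) (Fin n) ℝ} {δ : ℝ}

lemma RIP.l2_mulVec_le {q : ℕ} (hΦ : RIP Φ q δ) {u : Fin n → ℝ}
    (hu : (Function.support u).ncard ≤ q) : l2 (Φ *ᵥ u) ≤ √(1 + δ) * l2 u :=
  calc l2 (Φ *ᵥ u) = √(l2 (Φ *ᵥ u) ^ 2) := (Real.sqrt_sq (l2_nonneg _)).symm
    _ ≤ √((1 + δ) * l2 u ^ 2) := Real.sqrt_le_sqrt (hΦ u hu).2
    _ = √(1 + δ) * l2 u := by rw [Real.sqrt_mul' _ (sq_nonneg _), Real.sqrt_sq (l2_nonneg _)]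

theorem RIP.abs_dotProduct_mulVec_restr_le {q : ℕ} (hΦ : RIP Φ q δ) {S S' : Finset (Fin n)}
    (hSS' : Disjoint S S') (hq : #S + #S' ≤ q) (u v : Fin n → ℝ) :
    |(Φ *ᵥ restr S u) ⬝ᵥ (Φ *ᵥ restr S' v)| ≤ δ * l2 (restr S u) * l2 (restr S' v) := by
  set U := restr S u
  set V := restr S' v
  rcases (l2_nonneg U).eq_or_lt with hU | hU
  · rw [← hU]; simp [l2_eq_zero.1 hU.symm]
  rcases (l2_nonneg V).eq_or_lt with hV | hV
  · rw [← hV]; simp [l2_eq_zero.1 hV.symm]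
  have hUV : U ⬝ᵥ V = 0 := dotProduct_restr_restr hSS' u v
  have hsupp (a b : ℝ) : (Function.support (a • U + b • V)).ncard ≤ q :=
    (ncard_support_le_card (S := S ∪ S') fun i hi => by simp_all [U, V, restr]).trans
      ((card_union_le _ _).trans hq)
  -- `‖V‖ U ± ‖U‖ V` both have squared norm `2 ‖U‖² ‖V‖²`; RIP on them bounds the cross term
  have hadd := hΦ _ (hsupp (l2 V) (l2 U))
  have hsub := hΦ _ (hsupp (l2 V) (-l2 U))
  simp only [mulVec_add, mulVec_smul, sq_l2_smul_add_smul, hUV] at hadd hsub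
  rw [abs_le]
  constructor <;> nlinarith [mul_pos hU hV]

theorem RIP.one_sub_mul_l2_restr_le {s k M : ℕ} (hΦ : RIP Φ (s + 2 * k) δ) (hδ : 0 ≤ δ)
    {A B₀ : Finset (Fin n)} {B : ℕ → Finset (Fin n)} (hA : #A ≤ s + k) (hB₀ : #B₀ ≤ k)
    (hB : ∀ j, #(B j) ≤ k) (hAB₀ : Disjoint A B₀) (hAB : ∀ j, Disjoint A (B j))
    (hB₀B : ∀ j, Disjoint B₀ (B j)) {h : Fin n → ℝ}
    (hh : h = restr (A ∪ B₀) h + ∑ j ∈ range M, restr (B j) h) :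
    (1 - δ) * l2 (restr (A ∪ B₀) h) ≤
      √(1 + δ) * l2 (Φ *ᵥ h) + √2 * δ * ∑ j ∈ range M, l2 (restr (B j) h) := by
  set H := l2 (restr (A ∪ B₀) h)
  set tail := ∑ j ∈ range M, l2 (restr (B j) h)
  have hsupp : (Function.support (restr (A ∪ B₀) h)).ncard ≤ s + 2 * k :=
    (ncard_support_restr_le _ _).trans <| (card_union_le _ _).trans (by omega)
  have hcross (j : ℕ) : -((Φ *ᵥ restr (A ∪ B₀) h) ⬝ᵥ (Φ *ᵥ restr (B j) h)) ≤
      √2 * δ * H * l2 (restr (B j) h) := by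
    have hA' := hΦ.abs_dotProduct_mulVec_restr_le (hAB j) (by linarith [hB j]) h h
    have hB₀' := hΦ.abs_dotProduct_mulVec_restr_le (hB₀B j) (by linarith [hB j]) h h
    have hsplit := mul_le_mul_of_nonneg_right (l2_restr_add_l2_restr_le hAB₀ h)
      (mul_nonneg hδ (l2_nonneg (restr (B j) h)))
    rw [restr_union hAB₀, mulVec_add, add_dotProduct]
    linarith [abs_le.1 hA', abs_le.1 hB₀']
  have hmulVec : Φ *ᵥ h = Φ *ᵥ restr (A ∪ B₀) h + ∑ j ∈ range M, Φ *ᵥ restr (B j) h := by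
    rw [← mulVec_sum, ← mulVec_add, ← hh]
  have hsq : (1 - δ) * H ^ 2 ≤ √(1 + δ) * H * l2 (Φ *ᵥ h) + √2 * δ * H * tail :=
    calc (1 - δ) * H ^ 2 ≤ l2 (Φ *ᵥ restr (A ∪ B₀) h) ^ 2 := (hΦ _ hsupp).1
      _ = (Φ *ᵥ restr (A ∪ B₀) h) ⬝ᵥ (Φ *ᵥ h) +
          ∑ j ∈ range M, -((Φ *ᵥ restr (A ∪ B₀) h) ⬝ᵥ (Φ *ᵥ restr (B j) h)) := by
        rw [hmulVec, dotProduct_add, dotProduct_sum, sq_l2_eq_dotProduct_self, sum_neg_distrib]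
        ring
      _ ≤ l2 (Φ *ᵥ restr (A ∪ B₀) h) * l2 (Φ *ᵥ h) +
          ∑ j ∈ range M, √2 * δ * H * l2 (restr (B j) h) :=
        add_le_add (le_of_abs_le (abs_dotProduct_le _ _)) (sum_le_sum fun j _ => hcross j)
      _ ≤ √(1 + δ) * H * l2 (Φ *ᵥ h) + √2 * δ * H * tail := by
        rw [← mul_sum]
        gcongr
        exacts [l2_nonneg _, hΦ.l2_mulVec_le hsupp]
  rcases (show 0 ≤ H from l2_nonneg _).eq_or_lt with hH | hH
  · rw [← hH, mul_zero]
    exact add_nonneg (mul_nonneg (Real.sqrt_nonneg _) (l2_nonneg _))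
      (mul_nonneg (mul_nonneg (Real.sqrt_nonneg _) hδ) (sum_nonneg fun j _ => l2_nonneg _))
  · exact le_of_mul_le_mul_right (by linarith) hH

end RIP

lemma Nat.div_eq_iff_mem_Ico {k q j : ℕ} (hk : 0 < k) :
    q / k = j ↔ q ∈ Ico (j * k) (j * k + k) := by
  rw [Nat.div_eq_iff hk, mem_Ico]
  omega

lemma Antitone.sqrt_sum_sq_Ico_le {a : ℕ → ℝ} (ha : Antitone a) (ha₀ : ∀ q, 0 ≤ a q) (p k : ℕ) :
    √(∑ q ∈ Ico (p + k) (p + k + k), a q ^ 2) ≤ (√k)⁻¹ * ∑ q ∈ Ico p (p + k), a q := by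
  -- every entry of the later block is at most `a (p + k)`, every entry of the earlier one at least
  set c := a (p + k)
  have hlate : ∑ q ∈ Ico (p + k) (p + k + k), a q ^ 2 ≤ k * c ^ 2 := by
    calc _ ≤ ∑ q ∈ Ico (p + k) (p + k + k), c ^ 2 :=
          sum_le_sum fun q hq => pow_le_pow_left₀ (ha₀ q) (ha (mem_Ico.1 hq).1) 2
      _ = k * c ^ 2 := by simp
  have hearly : k * c ≤ ∑ q ∈ Ico p (p + k), a q := by
    calc (k : ℝ) * c = ∑ q ∈ Ico p (p + k), c := by simp
      _ ≤ _ := sum_le_sum fun q hq => ha (mem_Ico.1 hq).2.le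
  calc √(∑ q ∈ Ico (p + k) (p + k + k), a q ^ 2) ≤ √(k * c ^ 2) := Real.sqrt_le_sqrt hlate
    _ = (√k)⁻¹ * (k * c) := by
      rw [Real.sqrt_mul (Nat.cast_nonneg _), Real.sqrt_sq (ha₀ _), ← mul_assoc, inv_mul_eq_div,
        Real.div_sqrt]
    _ ≤ _ := by gcongr

theorem exists_block_decomposition {n k : ℕ} (hk : 0 < k) (g : Fin n → ℝ) :
    ∃ B : ℕ → Finset (Fin n), (∀ j, #(B j) ≤ k) ∧ Pairwise (Disjoint on B) ∧
      ∑ j ∈ range (n + 1), restr (B j) g = g ∧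
      ∑ j ∈ range n, l2 (restr (B (j + 1)) g) ≤ (√k)⁻¹ * l1 g := by
  -- `B j` holds the entries of ranks `j k, …, j k + k - 1` in decreasing order of `|g i|`
  set σ := Tuple.sort fun i => -|g i|
  set a : ℕ → ℝ := fun q => if hq : q < n then |g (σ ⟨q, hq⟩)| else 0
  have ha₀ (q : ℕ) : 0 ≤ a q := by unfold a; split_ifs <;> positivity
  have ha : Antitone a := by
    intro p q hpq
    by_cases hq : q < n
    · have := Tuple.monotone_sort (fun i => -|g i|)
        (show (⟨p, by omega⟩ : Fin n) ≤ ⟨q, hq⟩ from hpq)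
      simp only [Function.comp_apply, neg_le_neg_iff] at this
      simpa [a, hq, show p < n by omega]
    · simpa [a, hq] using ha₀ p
  set B : ℕ → Finset (Fin n) := fun j => {i | (σ.symm i : ℕ) / k = j}
  have hsum (F : ℝ → ℝ) (hF : F 0 = 0) (j : ℕ) :
      ∑ i ∈ B j, F |g i| = ∑ q ∈ Ico (j * k) (j * k + k), F (a q) := by
    refine sum_bij_ne_zero (fun i _ _ => σ.symm i) (fun i hi _ => ?_)
      (fun i₁ _ _ i₂ _ _ h => σ.symm.injective (Fin.val_injective h)) (fun q hq hFq => ?_)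
      (fun i _ _ => by simp [a])
    · simpa [B, Nat.div_eq_iff_mem_Ico hk] using hi
    · have hqn : q < n := by
        by_contra hqn
        simp [a, hqn, hF] at hFq
      exact ⟨σ ⟨q, hqn⟩, by simpa [B, Nat.div_eq_iff_mem_Ico hk] using hq,
        by simpa [a, hqn] using hFq, by simp⟩
  have hdisj : Pairwise (Disjoint on B) := fun j j' hjj' =>
    disjoint_left.2 fun i hi hi' => hjj' (by simp_all [B])
  have hblock (j : ℕ) : l2 (restr (B (j + 1)) g) ≤ (√k)⁻¹ * ∑ i ∈ B j, |g i| := by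
    have hlate := hsum (· ^ 2) (by simp) (j + 1)
    have hearly := hsum id rfl j
    simp only [sq_abs, id, add_one_mul] at hlate hearly
    rw [l2_restr, hlate, hearly]
    exact ha.sqrt_sum_sq_Ico_le ha₀ (j * k) k
  refine ⟨B, fun j => ?_, hdisj, ?_, ?_⟩
  · calc #(B j) ≤ #(Ico (j * k) (j * k + k)) :=
        card_le_card_of_injOn (fun i => (σ.symm i : ℕ))
          (fun i hi => by simpa [B, Nat.div_eq_iff_mem_Ico hk] using hi)
          (fun i₁ _ i₂ _ h => σ.symm.injective (Fin.val_injective h))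
      _ = k := by simp
  · ext i
    simp only [Finset.sum_apply, restr, B, mem_filter, mem_univ, true_and]
    rw [sum_ite_eq, if_pos]
    have := Nat.div_le_self (σ.symm i : ℕ) k
    exact mem_range.2 (by omega)
  · calc ∑ j ∈ range n, l2 (restr (B (j + 1)) g)
        ≤ ∑ j ∈ range n, (√k)⁻¹ * ∑ i ∈ B j, |g i| := sum_le_sum fun j _ => hblock j
      _ = (√k)⁻¹ * ∑ i ∈ (range n).biUnion B, |g i| := by
        rw [← mul_sum, sum_biUnion (hdisj.set_pairwise _)]
      _ ≤ (√k)⁻¹ * l1 g := by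
        gcongr
        exact sum_le_sum_of_subset_of_nonneg (subset_univ _) fun i _ _ => abs_nonneg _

lemma l1_restr_compl_union_sub_le {n : ℕ} {T T₀ : Finset (Fin n)} {x x' : Fin n → ℝ}
    (hx' : l1 (restr Tᶜ x') ≤ l1 (restr Tᶜ x)) :
    l1 (restr (T ∪ T₀)ᶜ (x - x')) ≤ l1 (restr T₀ (x - x')) + 2 * l1 (restr (T ∪ T₀)ᶜ x) := by
  have hpoint (i : Fin n) :
      |restr (T ∪ T₀)ᶜ (x - x') i| - |restr T₀ (x - x') i| - 2 * |restr (T ∪ T₀)ᶜ x i| ≤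
        |restr Tᶜ x' i| - |restr Tᶜ x i| := by
    simp only [restr, Pi.sub_apply, mem_compl, mem_union]
    split_ifs <;> simp_all <;>
      linarith [abs_sub (x i) (x' i), abs_sub_abs_le_abs_sub (x i) (x' i), abs_nonneg (x i - x' i)]
  have := sum_le_sum fun i (_ : i ∈ univ) => hpoint i
  simp only [sum_sub_distrib, ← mul_sum] at this
  unfold l1 at hx' ⊢
  linarith

theorem RIP.l2_le_of_cone_of_tube {m n s k : ℕ} {Φ : Matrix (Fin m) (Fin n) ℝ} {δ : ℝ}
    (hΦ : RIP Φ (s + 2 * k) δ) (hk : 0 < k) (hδ₀ : 0 ≤ δ) (hδ : δ < √2 - 1)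
    {A T₀ : Finset (Fin n)} (hA : #A ≤ s + k) (hT₀A : T₀ ⊆ A) (hT₀ : #T₀ ≤ k)
    {h : Fin n → ℝ} {ε e : ℝ} (htube : l2 (Φ *ᵥ h) ≤ 2 * ε)
    (hcone : l1 (restr Aᶜ h) ≤ l1 (restr T₀ h) + 2 * e) :
    l2 h ≤ (4 * √(1 + δ) / (1 - δ - √2 * δ)) * ε +
      (2 * (1 + √2 * δ - δ) / (1 - δ - √2 * δ)) * ((√k)⁻¹ * e) := by
  obtain ⟨B, hB, hBdisj, hBsum, hBtail⟩ := exists_block_decomposition hk (restr Aᶜ h)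
  set C : ℕ → Finset (Fin n) := fun j => B j ∩ Aᶜ
  have hAC (j : ℕ) : Disjoint A (C j) :=
    disjoint_left.2 fun i hi hi' => (mem_compl.1 (mem_inter.1 hi').2) hi
  have hC (j : ℕ) : restr (C j) h = restr (B j) (restr Aᶜ h) := (restr_restr _ _ _).symm
  have hh : h = restr (A ∪ C 0) h + ∑ j ∈ range n, restr (C (j + 1)) h := by
    conv_lhs => rw [← restr_add_restr_compl A h, ← hBsum, sum_range_succ']
    simp only [restr_union (hAC 0), hC]
    abel
  have hhead := hΦ.one_sub_mul_l2_restr_le hδ₀ hA ((card_le_card inter_subset_left).trans (hB 0))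
    (fun j => (card_le_card inter_subset_left).trans (hB (j + 1))) (hAC 0) (fun j => hAC (j + 1))
    (fun j => (hBdisj (by omega : 0 ≠ j + 1)).mono inter_subset_left inter_subset_left) hh
  set H := l2 (restr (A ∪ C 0) h)
  set tail := ∑ j ∈ range n, l2 (restr (C (j + 1)) h)
  set e' := (√k)⁻¹ * e
  have htail : tail ≤ H + 2 * e' :=
    calc tail ≤ (√k)⁻¹ * l1 (restr Aᶜ h) := by simpa only [tail, hC] using hBtail
      _ ≤ (√k)⁻¹ * (l1 (restr T₀ h) + 2 * e) := by gcongr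
      _ ≤ (√k)⁻¹ * (√k * l2 (restr T₀ h) + 2 * e) := by
        gcongr
        refine (l1_restr_le_sqrt_card_mul_l2 T₀ h).trans ?_
        gcongr
        exact l2_nonneg _
      _ = l2 (restr T₀ h) + 2 * e' := by simp only [e']; field_simp
      _ ≤ H + 2 * e' := by gcongr; exact l2_restr_mono (hT₀A.trans subset_union_left) h
  have hsplit : l2 h ≤ H + tail := by
    calc l2 h ≤ H + l2 (∑ j ∈ range n, restr (C (j + 1)) h) := by
          conv_lhs => rw [hh]
          exact l2_add_le _ _
      _ ≤ H + tail := by gcongr; exact l2_sum_le _ _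
  have hP : 0 < 1 - δ - √2 * δ := by nlinarith [Real.sq_sqrt (zero_le_two : (0 : ℝ) ≤ 2)]
  rw [div_mul_eq_mul_div, div_mul_eq_mul_div, ← add_div, le_div_iff₀ hP]
  linarith [mul_le_mul_of_nonneg_left htube (Real.sqrt_nonneg (1 + δ)),
    mul_le_mul_of_nonneg_left htail (mul_nonneg (Real.sqrt_nonneg 2) hδ₀),
    mul_le_mul_of_nonneg_left htail hP.le, mul_le_mul_of_nonneg_left hsplit hP.le]

theorem ibpdn_stability_single_delta_general
    {m n : ℕ} (Φ : Matrix (Fin m) (Fin n) ℝ)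
    (T : Finset (Fin n)) (s k : ℕ) (hs : T.card = s) (hk : 1 ≤ k)
    (δ : ℝ) (hδ : δ ∈ Set.Ioo (0 : ℝ) (Real.sqrt 2 - 1))
    (hRIP : RIP Φ (s + 2 * k) δ)
    (x : Fin n → ℝ) (ε : ℝ)
    (nse : Fin m → ℝ) (hnse : l2 nse ≤ ε)
    (y : Fin m → ℝ) (hy : y = Φ.mulVec x + nse)
    (xstar : Fin n → ℝ) (hsol : solvesIBPDN Φ y ε T xstar)
    (r : Fin n → ℝ) (hr : r = x - restr T x)
    (T₀ : Finset (Fin n)) (hT₀card : T₀.card = k) :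
    l2 (x - xstar) ≤
      (4 * Real.sqrt (1 + δ) / (1 - δ - Real.sqrt 2 * δ)) * ε
        + (2 * (1 + Real.sqrt 2 * δ - δ) / (1 - δ - Real.sqrt 2 * δ)) *
            ((Real.sqrt k)⁻¹ * l1 (r - restr T₀ r)) := by
  have hfeas : l2 (y - Φ *ᵥ x) ≤ ε := by rwa [hy, add_sub_cancel_left]
  have htube : l2 (Φ *ᵥ (x - xstar)) ≤ 2 * ε := by
    rw [show Φ *ᵥ (x - xstar) = (y - Φ *ᵥ xstar) - (y - Φ *ᵥ x) by rw [mulVec_sub]; abel]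
    linarith [l2_sub_le (y - Φ *ᵥ xstar) (y - Φ *ᵥ x), hsol.1]
  have hr₀ : r - restr T₀ r = restr (T ∪ T₀)ᶜ x := by
    rw [hr, sub_restr, sub_restr, restr_restr, compl_union, inter_comm]
  rw [hr₀]
  exact hRIP.l2_le_of_cone_of_tube hk hδ.1.le hδ.2 ((card_union_le _ _).trans (by omega))
    subset_union_right hT₀card.le htube (l1_restr_compl_union_sub_le (hsol.2 x hfeas))

/-- **iBPDN stability under the single RIP condition `δ_{s+2k} < √2 − 1`.** -/
theorem ibpdn_stability_single_delta
    {m n : ℕ} (Φ : Matrix (Fin m) (Fin n) ℝ)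
    (T : Finset (Fin n)) (s k : ℕ) (hs : T.card = s) (hk : 1 ≤ k)
    (δ : ℝ) (hδ : δ ∈ Set.Ioo (0 : ℝ) (Real.sqrt 2 - 1))
    (hRIP : RIP Φ (s + 2 * k) δ)
    (x : Fin n → ℝ) (ε : ℝ) (hε : 0 ≤ ε)
    (nse : Fin m → ℝ) (hnse : l2 nse ≤ ε)
    (y : Fin m → ℝ) (hy : y = Φ.mulVec x + nse)
    (xstar : Fin n → ℝ) (hsol : solvesIBPDN Φ y ε T xstar)
    (r : Fin n → ℝ) (hr : r = x - restr T x)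
    (T₀ : Finset (Fin n)) (hT₀card : T₀.card = k) (hT₀ : isLargest r T₀) :
    l2 (x - xstar) ≤
      (4 * Real.sqrt (1 + δ) / (1 - δ - Real.sqrt 2 * δ)) * ε
        + (2 * (1 + Real.sqrt 2 * δ - δ) / (1 - δ - Real.sqrt 2 * δ)) *
            ((Real.sqrt k)⁻¹ * l1 (r - restr T₀ r)) :=
  ibpdn_stability_single_delta_general Φ T s k hs hk δ hδ hRIP x ε nse hnse y hy xstar hsol r hr T₀
    hT₀card
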